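/- arXiv:0707.0667 — 2 statements merged into one kernel-verified Lean document; each statement's English description precedes it below -/
import Mathlib

section
/- The Szegő coefficients α_{ν,n}^{(λ)} = (1-λ)_ν(n+1)_ν/(ν!(n+λ+1)_ν) satisfy, for integer λ = m ≥ 2 and 0 ≤ ν ≤ m−1, the identity α_{ν-1,n+1}^{(m-1)} + α_{ν,n+1}^{(m-1)} − (2(n+2)/(n+m+1)) α_{ν-1,n+2}^{(m-1)} = α_{ν,n}^{(m)}, with the convention that α terms with negative index ν vanish. -/
/-!
For `ν = k + 1` all four coefficients are explicit multiples of `β = α_{k,n+1}^{(λ-1)}`: since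
`(a)_{k+1} = (a)_k (a + k) = a (a + 1)_k`, raising `ν` by one, raising `n` by one, and trading
`(λ, n)` for `(λ - 1, n + 1)` each multiply `α` by a ratio of linear factors. Dividing by `β`
leaves a polynomial identity in `n`, `λ`, `k`; the cases `ν ≤ 0` are immediate.
-/

open Finset

/-- Pochhammer symbol (rising factorial) for a real argument. -/
noncomputable def poch (a : ℝ) (k : ℕ) : ℝ := ∏ i ∈ Finset.range k, (a + i)

/-- Szegő coefficient `α_{ν,n}^{(λ)}`, with the convention that it vanishes
for negative index `ν`. -/
noncomputable def szegoAlpha (lam : ℝ) (ν : ℤ) (n : ℕ) : ℝ :=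
  if ν < 0 then 0
  else poch (1 - lam) ν.toNat * poch (n + 1) ν.toNat /
    ((Nat.factorial ν.toNat : ℝ) * poch (n + lam + 1) ν.toNat)

section Pochhammer

variable (a : ℝ) (k : ℕ)

@[simp]
lemma poch_zero : poch a 0 = 1 := by
  simp [poch]

lemma poch_succ : poch a (k + 1) = poch a k * (a + k) := by
  simp [poch, prod_range_succ]

lemma poch_succ' : poch a (k + 1) = a * poch (a + 1) k := by
  simp only [poch, prod_range_succ', Nat.cast_add, Nat.cast_one, Nat.cast_zero, add_zero]
  ring_nf

lemma poch_add_one {a : ℝ} (ha : a ≠ 0) : poch (a + 1) k = poch a k * (a + k) / a := by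
  rw [← poch_succ, poch_succ', mul_div_cancel_left₀ _ ha]

end Pochhammer

section SzegoAlpha

variable (lam : ℝ) (n : ℕ)

lemma szegoAlpha_of_neg {ν : ℤ} (hν : ν < 0) : szegoAlpha lam ν n = 0 :=
  if_pos hν

lemma szegoAlpha_natCast (k : ℕ) :
    szegoAlpha lam k n =
      poch (1 - lam) k * poch (n + 1) k / (k.factorial * poch (n + lam + 1) k) := by
  simp [szegoAlpha]

@[simp]
lemma szegoAlpha_zero : szegoAlpha lam 0 n = 1 := by
  simpa using szegoAlpha_natCast lam n 0

lemma szegoAlpha_succ (k : ℕ) :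
    szegoAlpha lam (k + 1) n =
      szegoAlpha lam k n * ((1 - lam + k) * (n + 1 + k) / ((k + 1) * (n + lam + 1 + k))) := by
  rw [← Nat.cast_succ, szegoAlpha_natCast, szegoAlpha_natCast, div_mul_div_comm]
  simp only [poch_succ, Nat.factorial_succ, Nat.cast_mul, Nat.cast_succ]
  ring_nf

-- Trading `(λ, n)` for `(λ - 1, n + 1)` leaves the denominator `(n + λ + 1)_ν` unchanged.
lemma szegoAlpha_succ_eq_sub_one (k : ℕ) :
    szegoAlpha lam (k + 1) n =
      szegoAlpha (lam - 1) k (n + 1) * ((1 - lam) * (n + 1) / ((k + 1) * (n + lam + 1 + k))) := by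
  rw [← Nat.cast_succ, szegoAlpha_natCast, szegoAlpha_natCast, div_mul_div_comm]
  rw [poch_succ (n + lam + 1), poch_succ', poch_succ']
  simp only [Nat.factorial_succ, Nat.cast_mul, Nat.cast_succ]
  ring_nf

lemma szegoAlpha_add_one_right (k : ℕ) (h : (n : ℝ) + lam + 1 ≠ 0) :
    szegoAlpha lam k (n + 1) =
      szegoAlpha lam k n * ((n + 1 + k) / (n + 1) * ((n + lam + 1) / (n + lam + 1 + k))) := by
  have hn : (n : ℝ) + 1 ≠ 0 := by positivity
  rw [szegoAlpha_natCast, szegoAlpha_natCast]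
  push_cast
  rw [add_right_comm _ (1 : ℝ) lam, poch_add_one k hn, poch_add_one k h]
  field_simp

end SzegoAlpha

theorem szegoAlpha_recurrence (lam : ℝ) (ν : ℤ) (n : ℕ) (h : 0 < (n : ℝ) + lam + 1) :
    szegoAlpha (lam - 1) (ν - 1) (n + 1) + szegoAlpha (lam - 1) ν (n + 1) -
        (2 * ((n : ℝ) + 2) / ((n : ℝ) + lam + 1)) * szegoAlpha (lam - 1) (ν - 1) (n + 2) =
      szegoAlpha lam ν n := by
  rcases lt_trichotomy ν 0 with hneg | rfl | hpos
  · simp only [szegoAlpha_of_neg _ _ hneg, szegoAlpha_of_neg _ _ (by omega : ν - 1 < 0)]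
    ring
  · simp [szegoAlpha_of_neg]
  obtain ⟨k, rfl⟩ : ∃ k : ℕ, ν = k + 1 := ⟨(ν - 1).toNat, by omega⟩
  have hN : ((n + 1 : ℕ) : ℝ) + (lam - 1) + 1 = n + lam + 1 := by push_cast; ring
  rw [add_sub_cancel_right, szegoAlpha_succ _ (n + 1), show n + 2 = n + 1 + 1 from rfl,
    szegoAlpha_add_one_right _ (n + 1) _ (hN ▸ h.ne'), szegoAlpha_succ_eq_sub_one, hN]
  have hk : (n : ℝ) + lam + 1 + k ≠ 0 := by positivity
  push_cast
  field_simp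
  ring

theorem szego_alpha_recurrence_general (m : ℕ) (n : ℕ) (ν : ℕ) :
    szegoAlpha ((m : ℝ) - 1) ((ν : ℤ) - 1) (n + 1) +
        szegoAlpha ((m : ℝ) - 1) (ν : ℤ) (n + 1) -
      (2 * ((n : ℝ) + 2) / ((n : ℝ) + m + 1)) *
        szegoAlpha ((m : ℝ) - 1) ((ν : ℤ) - 1) (n + 2) =
      szegoAlpha (m : ℝ) (ν : ℤ) n :=
  szegoAlpha_recurrence m ν n (by positivity)

theorem szego_alpha_recurrence (m : ℕ) (hm : 2 ≤ m) (n : ℕ) (ν : ℕ) (hν : ν ≤ m - 1) :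
    szegoAlpha ((m : ℝ) - 1) ((ν : ℤ) - 1) (n + 1) +
        szegoAlpha ((m : ℝ) - 1) (ν : ℤ) (n + 1) -
      (2 * ((n : ℝ) + 2) / ((n : ℝ) + m + 1)) *
        szegoAlpha ((m : ℝ) - 1) ((ν : ℤ) - 1) (n + 2) =
      szegoAlpha (m : ℝ) (ν : ℤ) n :=
  szego_alpha_recurrence_general m n ν
end

section
/- The entropy integral of the Chebyshev polynomial of the second kind satisfies E(C_n^{(1)}) = −∫_{−1}^{1} (U_n(x))² log((U_n(x))²) √(1−x²) dx = (π/2)(1/(n+1) − 1) for all n ≥ 0. -/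
open Finset

/-- Gegenbauer (ultraspherical) polynomial `C_n^{(λ)}(x)`, via its standard
explicit expansion. -/
noncomputable def gegen (lam : ℝ) (n : ℕ) (x : ℝ) : ℝ :=
  ∑ k ∈ Finset.range (n / 2 + 1),
    (-1 : ℝ) ^ k * poch lam (n - k) /
      ((Nat.factorial k : ℝ) * (Nat.factorial (n - 2 * k) : ℝ)) * (2 * x) ^ (n - 2 * k)

/-
Substituting `x = cos θ` and using `U_n(cos θ) sin θ = sin (mθ)` with `m = n + 1` turns
`∫ U_n² log U_n² √(1 - x²) dx` into
`∫₀^π sin² (mθ) log sin² (mθ) dθ - ∫₀^π sin² (mθ) log sin² θ dθ`.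
The first integral does not depend on `m`, by `π`-periodicity. In the second, writing
`sin² (mθ) = (1 - cos 2mθ) / 2` leaves `∫₀^π log sin θ dθ = -π log 2` and the Fourier coefficient
`∫₀^π cos (2mθ) log sin θ dθ = -π / (2m)`.
-/

open Real Polynomial Polynomial.Chebyshev intervalIntegral MeasureTheory

lemma poch_one (k : ℕ) : poch 1 k = k.factorial := by
  rw [poch, ← prod_range_add_one_eq_factorial]
  push_cast
  simp only [add_comm]

lemma gegen_one_eq_sum_choose (n : ℕ) {N : ℕ} (hN : n / 2 < N) (x : ℝ) :
    gegen 1 n x = ∑ k ∈ range N, (-1) ^ k * ((n - k).choose k : ℝ) * (2 * x) ^ (n - 2 * k) := by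
  rw [gegen, ← sum_subset (range_subset_range.2 hN)]
  · refine sum_congr rfl fun k hk => ?_
    have hk : k ≤ n - k := by rw [mem_range] at hk; omega
    rw [poch_one, Nat.cast_choose ℝ hk, show n - k - k = n - 2 * k by omega]
    ring
  · intro k _ hk
    rw [mem_range] at hk
    rw [Nat.choose_eq_zero_of_lt (by omega)]
    simp

-- Pascal's rule for the coefficients of `U_n` in powers of `y = 2x`; the truncated subtractions
-- force the case split.
lemma chebyshevU_term_add_two (n k : ℕ) (y : ℝ) :
    (-1) ^ (k + 1) * ((n + 2 - (k + 1)).choose (k + 1) : ℝ) * y ^ (n + 2 - 2 * (k + 1)) =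
      y * ((-1) ^ (k + 1) * ((n + 1 - (k + 1)).choose (k + 1) : ℝ) * y ^ (n + 1 - 2 * (k + 1)))
        - (-1) ^ k * ((n - k).choose k : ℝ) * y ^ (n - 2 * k) := by
  rcases lt_or_ge (2 * k) n with hlt | hge
  · obtain ⟨d, rfl⟩ := Nat.exists_eq_add_of_lt hlt
    rw [show 2 * k + d + 1 + 2 - (k + 1) = (k + d + 1) + 1 by omega,
      show 2 * k + d + 1 + 1 - (k + 1) = k + d + 1 by omega,
      show 2 * k + d + 1 - k = k + d + 1 by omega, Nat.choose_succ_succ',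
      show 2 * k + d + 1 + 2 - 2 * (k + 1) = d + 1 by omega,
      show 2 * k + d + 1 + 1 - 2 * (k + 1) = d by omega,
      show 2 * k + d + 1 - 2 * k = d + 1 by omega]
    push_cast
    ring
  · have hzero : (n + 1 - (k + 1)).choose (k + 1) = 0 := Nat.choose_eq_zero_of_lt (by omega)
    rcases hge.eq_or_lt with heq | hlt
    · subst heq
      rw [hzero, show 2 * k + 2 - (k + 1) = k + 1 by omega, show 2 * k - k = k by omega,
        show 2 * k + 2 - 2 * (k + 1) = 0 by omega]
      simp [pow_succ]
    · rw [hzero, Nat.choose_eq_zero_of_lt (by omega : n + 2 - (k + 1) < k + 1),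
        Nat.choose_eq_zero_of_lt (by omega : n - k < k)]
      simp

lemma gegen_one_add_two (n : ℕ) (x : ℝ) :
    gegen 1 (n + 2) x = 2 * x * gegen 1 (n + 1) x - gegen 1 n x := by
  rw [gegen_one_eq_sum_choose (n + 2) (N := n + 3) (by omega),
    gegen_one_eq_sum_choose (n + 1) (N := n + 2 + 1) (by omega),
    gegen_one_eq_sum_choose n (N := n + 2) (by omega), sum_range_succ', sum_range_succ' _ (n + 2)]
  simp_rw [chebyshevU_term_add_two, sum_sub_distrib, mul_add, mul_sum]
  simp only [pow_succ, Nat.sub_zero, mul_zero, Nat.choose_zero_right]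
  ring

lemma gegen_one_eq_eval_U (n : ℕ) (x : ℝ) : gegen 1 n x = (U ℝ n).eval x := by
  induction n using Nat.twoStepInduction with
  | zero => simp [gegen_one_eq_sum_choose 0 (N := 1) (by omega)]
  | one => simp [gegen_one_eq_sum_choose 1 (N := 1) (by omega)]
  | more n ih₀ ih₁ =>
    rw [gegen_one_add_two, ih₀, ih₁, show ((n + 2 : ℕ) : ℤ) = n + 2 by push_cast; ring, U_add_two]
    simp

lemma gegen_one_cos_mul_sin (n : ℕ) (θ : ℝ) :
    gegen 1 n (cos θ) * sin θ = sin ((n + 1) * θ) := by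
  rw [gegen_one_eq_eval_U]
  exact_mod_cast U_real_cos θ n

lemma integral_mul_sqrt_one_sub_sq (f : ℝ → ℝ) :
    ∫ x in -1..1, f x * √(1 - x ^ 2) = ∫ θ in 0..π, f (cos θ) * sin θ ^ 2 := calc
  ∫ x in -1..1, f x * √(1 - x ^ 2) = ∫ x in -1..1, f x * (1 - x ^ 2) * √(1 - x ^ 2)⁻¹ := by
    -- `√y = y * √y⁻¹` holds for every real `y`: both sides vanish when `y ≤ 0`.
    congr 1 with x
    rw [sqrt_inv, mul_assoc, ← div_eq_mul_inv, div_sqrt]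
  _ = ∫ θ in 0..π, f (cos θ) * sin θ ^ 2 := by
    rw [← integral_measureT, integral_measureT_eq_integral_cos]
    simp_rw [sin_sq]

lemma Function.Periodic.intervalIntegral_comp_natCast_mul {E : Type*} [NormedAddCommGroup E]
    [NormedSpace ℝ E] {f : ℝ → E} {T : ℝ} (hf : Function.Periodic f T)
    (hf_int : ∀ a b, IntervalIntegrable f volume a b) {m : ℕ} (hm : m ≠ 0) :
    ∫ x in 0..T, f (m * x) = ∫ x in 0..T, f x := by
  have hm' : (m : ℝ) ≠ 0 := by exact_mod_cast hm
  have h := hf.intervalIntegral_add_zsmul_eq m 0 hf_int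
  simp only [← Int.cast_smul_eq_zsmul ℝ, Int.cast_natCast, smul_eq_mul, zero_add] at h
  rw [integral_comp_mul_left _ hm', mul_zero, h, smul_smul, inv_mul_cancel₀ hm', one_smul]

lemma integral_eval_T_real_cos {n : ℤ} (hn : n ≠ 0) : ∫ θ in 0..π, (T ℝ n).eval (cos θ) = 0 :=
  integral_measureT_eq_integral_cos.symm.trans (integral_eval_T_real_measureT_of_ne_zero hn)

lemma intervalIntegrable_eval_cos (P : ℝ[X]) (a b : ℝ) :
    IntervalIntegrable (fun θ => P.eval (cos θ)) volume a b :=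
  (P.continuous.comp continuous_cos).intervalIntegrable a b

lemma integral_eval_U_two_mul_cos (j : ℕ) : ∫ θ in 0..π, (U ℝ (2 * j)).eval (cos θ) = π := by
  induction j with
  | zero => simp
  | succ j ih =>
    rw [show (2 * ((j + 1 : ℕ) : ℤ)) = 2 * j + 2 by push_cast; ring, U_eq_two_mul_T_add_U]
    simp only [eval_add, eval_mul, eval_ofNat]
    rw [integral_add ((intervalIntegrable_eval_cos _ _ _).const_mul 2)
      (intervalIntegrable_eval_cos _ _ _), intervalIntegral.integral_const_mul,
      integral_eval_T_real_cos (by omega), ih]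
    ring

lemma integral_eval_U_two_mul_add_one_cos_mul_cos (j : ℕ) :
    ∫ θ in 0..π, (U ℝ (2 * j + 1)).eval (cos θ) * cos θ = π := by
  have hU : ∀ θ, (U ℝ (2 * j + 1)).eval (cos θ) * cos θ =
      ((U ℝ (2 * (j + 1 : ℕ))).eval (cos θ) + (U ℝ (2 * j)).eval (cos θ)) / 2 := fun θ => by
    rw [show (2 * ((j + 1 : ℕ) : ℤ)) = 2 * j + 2 by push_cast; ring, U_add_two]
    simp only [eval_sub, eval_mul, eval_ofNat, eval_X]
    ring
  simp_rw [hU]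
  rw [intervalIntegral.integral_div, integral_add (intervalIntegrable_eval_cos _ _ _)
    (intervalIntegrable_eval_cos _ _ _), integral_eval_U_two_mul_cos, integral_eval_U_two_mul_cos]
  ring

lemma integral_cos_two_mul_mul_log_sin {k : ℕ} (hk : k ≠ 0) :
    ∫ θ in 0..π, cos (2 * k * θ) * log (sin θ) = -(π / (2 * k)) := by
  -- Integrate by parts against `sin (2kθ) = U_{2k-1}(cos θ) sin θ`: then `sin (2kθ) log sin θ` is
  -- continuous on `[0, π]` and vanishes at both ends, and `sin (2kθ) cot θ` is a polynomial
  -- in `cos θ`.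
  obtain ⟨j, rfl⟩ := Nat.exists_eq_add_one_of_ne_zero hk
  set m : ℝ := 2 * ((j + 1 : ℕ) : ℝ) with hm
  have hm0 : m ≠ 0 := by positivity
  have hsin : ∀ θ, sin (m * θ) = (U ℝ (2 * j + 1)).eval (cos θ) * sin θ := fun θ => by
    rw [U_real_cos, hm]
    push_cast
    ring_nf
  have hcont : Continuous fun θ => sin (m * θ) * log (sin θ) := by
    simp_rw [hsin, mul_assoc]
    exact ((U ℝ _).continuous.comp continuous_cos).mul continuous_sin.mul_log
  have hderiv : ∀ θ ∈ Set.Ioo 0 π, HasDerivAt (fun θ => sin (m * θ) * log (sin θ))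
      (m * (cos (m * θ) * log (sin θ)) + (U ℝ (2 * j + 1)).eval (cos θ) * cos θ) θ := by
    intro θ hθ
    have hs : sin θ ≠ 0 := (sin_pos_of_pos_of_lt_pi hθ.1 hθ.2).ne'
    refine (((hasDerivAt_id θ).const_mul m).sin.mul ((hasDerivAt_sin θ).log hs)).congr_deriv ?_
    simp only [id, mul_one]
    rw [hsin]
    field_simp
  have hpoly : IntervalIntegrable (fun θ => (U ℝ (2 * j + 1)).eval (cos θ) * cos θ) volume 0 π :=
    (intervalIntegrable_eval_cos _ 0 π).mul_continuousOn continuous_cos.continuousOn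
  have hlog : IntervalIntegrable (fun θ => cos (m * θ) * log (sin θ)) volume 0 π :=
    intervalIntegrable_log_sin.continuousOn_mul (by fun_prop)
  have hFTC := integral_eq_sub_of_hasDerivAt_of_le pi_pos.le hcont.continuousOn hderiv
    ((hlog.const_mul m).add hpoly)
  rw [integral_add (hlog.const_mul m) hpoly, intervalIntegral.integral_const_mul,
    integral_eval_U_two_mul_add_one_cos_mul_cos] at hFTC
  simp only [sin_pi, log_zero, mul_zero, sin_zero, sub_zero] at hFTC
  field_simp
  linarith

lemma intervalIntegrable_mul_log_sin_sq {g : ℝ → ℝ} (hg : Continuous g) (a b : ℝ) :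
    IntervalIntegrable (fun θ => g θ * log (sin θ ^ 2)) volume a b := by
  simp_rw [log_pow]
  exact (intervalIntegrable_log_sin.const_mul 2).continuousOn_mul hg.continuousOn

lemma integral_sin_mul_sq_mul_log_sin_sq {k : ℕ} (hk : k ≠ 0) :
    ∫ θ in 0..π, sin (k * θ) ^ 2 * log (sin θ ^ 2) = π / (2 * k) - π * log 2 := by
  have h : ∀ θ, sin (k * θ) ^ 2 * log (sin θ ^ 2) =
      log (sin θ) - cos (2 * k * θ) * log (sin θ) := fun θ => by
    rw [sin_sq_eq_half_sub, log_pow, show 2 * (k * θ) = 2 * k * θ by ring]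
    push_cast
    ring
  have hlog : IntervalIntegrable (fun θ => log (sin θ)) volume 0 π := intervalIntegrable_log_sin
  simp_rw [h]
  rw [integral_sub hlog (hlog.continuousOn_mul (by fun_prop)),
    integral_log_sin_zero_pi, integral_cos_two_mul_mul_log_sin hk]
  ring

lemma sq_mul_log_sq_mul_sq (a b : ℝ) :
    a ^ 2 * log (a ^ 2) * b ^ 2 = (a * b) ^ 2 * log ((a * b) ^ 2) - (a * b) ^ 2 * log (b ^ 2) := by
  rcases eq_or_ne a 0 with rfl | ha
  · simp
  rcases eq_or_ne b 0 with rfl | hb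
  · simp
  rw [mul_pow, log_mul (pow_ne_zero 2 ha) (pow_ne_zero 2 hb)]
  ring

theorem entropy_gegenbauer_one (n : ℕ) :
    -∫ x in (-1 : ℝ)..1,
        (gegen 1 n x) ^ 2 * Real.log ((gegen 1 n x) ^ 2) * Real.sqrt (1 - x ^ 2) =
      Real.pi / 2 * (1 / ((n : ℝ) + 1) - 1) := by
  set f : ℝ → ℝ := fun θ => sin θ ^ 2 * log (sin θ ^ 2)
  have hf : Continuous f := by fun_prop
  have hf_per : Function.Periodic f π := fun θ => by simp [f, sin_add_pi]
  have hsplit : ∀ θ, gegen 1 n (cos θ) ^ 2 * log (gegen 1 n (cos θ) ^ 2) * sin θ ^ 2 =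
      f ((n + 1 : ℕ) * θ) - sin ((n + 1 : ℕ) * θ) ^ 2 * log (sin θ ^ 2) := fun θ => by
    rw [sq_mul_log_sq_mul_sq, gegen_one_cos_mul_sin]
    push_cast
    rfl
  rw [integral_mul_sqrt_one_sub_sq (fun x => gegen 1 n x ^ 2 * log (gegen 1 n x ^ 2))]
  simp_rw [hsplit]
  rw [integral_sub ((by fun_prop : Continuous fun θ => f ((n + 1 : ℕ) * θ)).intervalIntegrable _ _)
      (intervalIntegrable_mul_log_sin_sq (by fun_prop) _ _),
    hf_per.intervalIntegral_comp_natCast_mul (fun a b => hf.intervalIntegrable a b) (by omega),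
    integral_sin_mul_sq_mul_log_sin_sq (by omega)]
  have h1 := integral_sin_mul_sq_mul_log_sin_sq one_ne_zero
  simp only [Nat.cast_one, one_mul] at h1
  rw [h1]
  push_cast
  field_simp
  ring
end
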